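/- arXiv:1609.02320 — 3 statements merged into one kernel-verified Lean document; each statement's English description precedes it below -/
import Mathlib

section
/- Refutation completeness of propositional (ground) resolution: if a finite set Γ of ground clauses is unsatisfiable (no truth assignment to atoms satisfies every clause), then the empty clause is derivable from Γ by repeated application of the resolution rule. -/
abbrev GClause (α : Type) : Type := Finset (Bool × α)

def SatClause {α : Type} (I : α → Bool) (C : GClause α) : Prop :=
  ∃ l ∈ C, I l.2 = l.1

inductive Deriv {α : Type} [DecidableEq α] (Γ : Set (GClause α)) :
    GClause α → Prop
  | ax {C : GClause α} : C ∈ Γ → Deriv Γ C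
  | res {C₁ C₂ : GClause α} {p : α} :
      Deriv Γ C₁ → Deriv Γ C₂ →
      (true, p) ∈ C₁ → (false, p) ∈ C₂ →
      Deriv Γ ((C₁.erase (true, p)) ∪ (C₂.erase (false, p)))

namespace GroundResAux

variable {α : Type} [DecidableEq α]

def atoms (Γ : Finset (GClause α)) : Finset α :=
  Γ.biUnion (fun C => C.image Prod.snd)

lemma deriv_trans {Γ Δ : Set (GClause α)} {C : GClause α}
    (h : Deriv Δ C) (hΔ : ∀ D ∈ Δ, Deriv Γ D) : Deriv Γ C := by
  induction h with
  | ax hC => exact hΔ _ hC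
  | res _ _ h1 h2 ih1 ih2 => exact Deriv.res ih1 ih2 h1 h2

omit [DecidableEq α] in
lemma lit_ne (l : Bool × α) (p : α) (h2 : l.2 = p) :
    l = (true, p) ∨ l = (false, p) := by
  rcases l with ⟨b, a⟩
  cases b <;> simp_all

lemma main : ∀ (n : ℕ) (Γ : Finset (GClause α)), (atoms Γ).card ≤ n →
    (¬ ∃ I : α → Bool, ∀ C ∈ Γ, SatClause I C) →
    Deriv (↑Γ : Set (GClause α)) (∅ : GClause α) := by
  intro n
  induction n with
  | zero =>
    intro Γ hcard hunsat
    have hA : atoms Γ = ∅ := Finset.card_eq_zero.mp (Nat.le_zero.mp hcard)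
    rcases Γ.eq_empty_or_nonempty with rfl | ⟨C, hC⟩
    · exact absurd ⟨fun _ => true, by simp⟩ hunsat
    · have hCempty : C = ∅ := by
        by_contra h
        obtain ⟨l, hl⟩ := Finset.nonempty_of_ne_empty h
        have : l.2 ∈ atoms Γ :=
          Finset.mem_biUnion.mpr ⟨C, hC, Finset.mem_image_of_mem _ hl⟩
        simp [hA] at this
      exact hCempty ▸ Deriv.ax (by exact_mod_cast hC)
  | succ n ih =>
    intro Γ hcard hunsat
    by_cases hA : atoms Γ = ∅
    · -- same as zero case
      rcases Γ.eq_empty_or_nonempty with rfl | ⟨C, hC⟩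
      · exact absurd ⟨fun _ => true, by simp⟩ hunsat
      · have hCempty : C = ∅ := by
          by_contra h
          obtain ⟨l, hl⟩ := Finset.nonempty_of_ne_empty h
          have : l.2 ∈ atoms Γ :=
            Finset.mem_biUnion.mpr ⟨C, hC, Finset.mem_image_of_mem _ hl⟩
          simp [hA] at this
        exact hCempty ▸ Deriv.ax (by exact_mod_cast hC)
    · obtain ⟨p, hp⟩ := Finset.nonempty_of_ne_empty hA
      set Γ' : Finset (GClause α) :=
        (Γ.filter (fun C => (true, p) ∉ C ∧ (false, p) ∉ C)) ∪
        ((Γ ×ˢ Γ).filter (fun q =>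
            (true, p) ∈ q.1 ∧ (false, p) ∉ q.1 ∧ (false, p) ∈ q.2 ∧ (true, p) ∉ q.2)).image
          (fun q => q.1.erase (true, p) ∪ q.2.erase (false, p)) with hΓ'
      -- every clause of Γ' is derivable from Γ
      have hder : ∀ D ∈ Γ', Deriv (↑Γ : Set (GClause α)) D := by
        intro D hD
        rw [hΓ', Finset.mem_union] at hD
        rcases hD with hD | hD
        · exact Deriv.ax (by exact_mod_cast (Finset.mem_filter.mp hD).1)
        · obtain ⟨⟨C₀, C₁⟩, hq, rfl⟩ := Finset.mem_image.mp hD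
          obtain ⟨hmem, h1, _, h2, _⟩ := Finset.mem_filter.mp hq
          obtain ⟨h0Γ, h1Γ⟩ := Finset.mem_product.mp hmem
          exact Deriv.res (Deriv.ax (by exact_mod_cast h0Γ))
            (Deriv.ax (by exact_mod_cast h1Γ)) h1 h2
      -- atoms of Γ' avoid p
      have hsub : atoms Γ' ⊆ (atoms Γ).erase p := by
        intro q hq
        obtain ⟨D, hD, hqD⟩ := Finset.mem_biUnion.mp hq
        obtain ⟨l, hl, hl2⟩ := Finset.mem_image.mp hqD
        rw [hΓ', Finset.mem_union] at hD
        rcases hD with hD | hD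
        · obtain ⟨hDΓ, hnt, hnf⟩ := Finset.mem_filter.mp hD
          refine Finset.mem_erase.mpr ⟨?_, Finset.mem_biUnion.mpr
            ⟨D, hDΓ, Finset.mem_image.mpr ⟨l, hl, hl2⟩⟩⟩
          intro hqp; subst hqp
          rcases lit_ne l q hl2 with rfl | rfl
          · exact hnt hl
          · exact hnf hl
        · obtain ⟨⟨C₀, C₁⟩, hfq, rfl⟩ := Finset.mem_image.mp hD
          obtain ⟨hmem, _, h0f, _, h1t⟩ := Finset.mem_filter.mp hfq
          obtain ⟨h0Γ, h1Γ⟩ := Finset.mem_product.mp hmem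
          rcases Finset.mem_union.mp hl with hl' | hl'
          · have hlC : l ∈ C₀ := Finset.mem_of_mem_erase hl'
            refine Finset.mem_erase.mpr ⟨?_, Finset.mem_biUnion.mpr
              ⟨C₀, h0Γ, Finset.mem_image.mpr ⟨l, hlC, hl2⟩⟩⟩
            intro hqp; subst hqp
            rcases lit_ne l q hl2 with rfl | rfl
            · exact (Finset.ne_of_mem_erase hl') rfl
            · exact h0f hlC
          · have hlC : l ∈ C₁ := Finset.mem_of_mem_erase hl'
            refine Finset.mem_erase.mpr ⟨?_, Finset.mem_biUnion.mpr
              ⟨C₁, h1Γ, Finset.mem_image.mpr ⟨l, hlC, hl2⟩⟩⟩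
            intro hqp; subst hqp
            rcases lit_ne l q hl2 with rfl | rfl
            · exact h1t hlC
            · exact (Finset.ne_of_mem_erase hl') rfl
      -- Γ' is unsatisfiable
      have hunsat' : ¬ ∃ I : α → Bool, ∀ C ∈ Γ', SatClause I C := by
        rintro ⟨I, hI⟩
        push_neg at hunsat
        obtain ⟨C₁, hC₁Γ, hC₁⟩ := hunsat (Function.update I p true)
        obtain ⟨C₀, hC₀Γ, hC₀⟩ := hunsat (Function.update I p false)
        have h1t : (true, p) ∉ C₁ := by
          intro h
          exact hC₁ ⟨(true, p), h, by simp⟩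
        have h0f : (false, p) ∉ C₀ := by
          intro h
          exact hC₀ ⟨(false, p), h, by simp⟩
        have h1f : (false, p) ∈ C₁ := by
          by_contra h
          have hmem : C₁ ∈ Γ' := by
            rw [hΓ', Finset.mem_union]
            exact Or.inl (Finset.mem_filter.mpr ⟨hC₁Γ, h1t, h⟩)
          obtain ⟨l, hl, hIl⟩ := hI C₁ hmem
          refine hC₁ ⟨l, hl, ?_⟩
          have hlp : l.2 ≠ p := by
            intro hlp
            rcases lit_ne l p hlp with rfl | rfl
            · exact h1t hl
            · exact h hl
          rw [Function.update_of_ne hlp]; exact hIl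
        have h0t : (true, p) ∈ C₀ := by
          by_contra h
          have hmem : C₀ ∈ Γ' := by
            rw [hΓ', Finset.mem_union]
            exact Or.inl (Finset.mem_filter.mpr ⟨hC₀Γ, h, h0f⟩)
          obtain ⟨l, hl, hIl⟩ := hI C₀ hmem
          refine hC₀ ⟨l, hl, ?_⟩
          have hlp : l.2 ≠ p := by
            intro hlp
            rcases lit_ne l p hlp with rfl | rfl
            · exact h hl
            · exact h0f hl
          rw [Function.update_of_ne hlp]; exact hIl
        have hR : C₀.erase (true, p) ∪ C₁.erase (false, p) ∈ Γ' := by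
          rw [hΓ', Finset.mem_union]
          refine Or.inr (Finset.mem_image.mpr ⟨(C₀, C₁), ?_, rfl⟩)
          exact Finset.mem_filter.mpr
            ⟨Finset.mem_product.mpr ⟨hC₀Γ, hC₁Γ⟩, h0t, h0f, h1f, h1t⟩
        obtain ⟨l, hl, hIl⟩ := hI _ hR
        rcases Finset.mem_union.mp hl with hl' | hl'
        · have hlC : l ∈ C₀ := Finset.mem_of_mem_erase hl'
          have hlp : l.2 ≠ p := by
            intro hlp
            rcases lit_ne l p hlp with rfl | rfl
            · exact (Finset.ne_of_mem_erase hl') rfl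
            · exact h0f hlC
          exact hC₀ ⟨l, hlC, by rw [Function.update_of_ne hlp]; exact hIl⟩
        · have hlC : l ∈ C₁ := Finset.mem_of_mem_erase hl'
          have hlp : l.2 ≠ p := by
            intro hlp
            rcases lit_ne l p hlp with rfl | rfl
            · exact h1t hlC
            · exact (Finset.ne_of_mem_erase hl') rfl
          exact hC₁ ⟨l, hlC, by rw [Function.update_of_ne hlp]; exact hIl⟩
      -- cardinality decreases
      have hcard' : (atoms Γ').card ≤ n := by
        have h1 : (atoms Γ').card ≤ ((atoms Γ).erase p).card :=
          Finset.card_le_card hsub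
        rw [Finset.card_erase_of_mem hp] at h1
        omega
      exact deriv_trans (ih Γ' hcard' hunsat') hder

end GroundResAux

/-- Refutation completeness of propositional (ground) resolution: if a finite
set of ground clauses is unsatisfiable, then the empty clause is derivable from
it by resolution. -/
theorem ground_resolution_refutation_complete {α : Type} [DecidableEq α]
    (Γ : Finset (GClause α))
    (hunsat : ¬ ∃ I : α → Bool, ∀ C ∈ Γ, SatClause I C) :
    Deriv (↑Γ : Set (GClause α)) (∅ : GClause α) :=
  GroundResAux.main (GroundResAux.atoms Γ).card Γ le_rfl hunsat
end

section
/- Propositional interpolation via resolution consequences (ground version of Lemma 3 / Theorem 2 of Slagle as used in the paper): let A and B be finite sets of ground clauses with B satisfiable. If A ∪ B is unsatisfiable, then there exists a finite set I of ground clauses such that every clause of I is a logical consequence of A, I ∪ B is unsatisfiable, and every atom occurring in I occurs in both A and B. -/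
/-- Atom `a` occurs in the set `Γ` of ground clauses. -/
def AtomOccurs {α : Type} (a : α) (Γ : Finset (GClause α)) : Prop :=
  ∃ C ∈ Γ, ∃ b : Bool, (b, a) ∈ C

/-- Propositional interpolation: if `B` is satisfiable and `A ∪ B` is
unsatisfiable, there is a finite set `I` of ground clauses such that every
clause of `I` is a logical consequence of `A`, `I ∪ B` is unsatisfiable, and
every atom occurring in `I` occurs in both `A` and `B`. -/
theorem ground_interpolation {α : Type} [DecidableEq α]
    (A B : Finset (GClause α))
    (hB : ∃ I : α → Bool, ∀ C ∈ B, SatClause I C)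
    (hAB : ¬ ∃ I : α → Bool, ∀ C ∈ A ∪ B, SatClause I C) :
    ∃ I : Finset (GClause α),
      (∀ C ∈ I, ∀ M : α → Bool, (∀ D ∈ A, SatClause M D) → SatClause M C) ∧
      (¬ ∃ M : α → Bool, ∀ C ∈ I ∪ B, SatClause M C) ∧
      (∀ C ∈ I, ∀ l ∈ C, AtomOccurs (Prod.snd l) A ∧ AtomOccurs (Prod.snd l) B) := by
  classical
  set atomsA := A.biUnion (fun C => C.image Prod.snd) with hatA
  set atomsB := B.biUnion (fun C => C.image Prod.snd) with hatB
  set T := atomsA ∩ atomsB with hT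
  set I := ((Finset.univ ×ˢ T).powerset).filter
    (fun C => ∀ M : α → Bool, (∀ D ∈ A, SatClause M D) → SatClause M C) with hI
  have occA : ∀ a ∈ atomsA, AtomOccurs a A := by
    intro a ha
    rw [hatA, Finset.mem_biUnion] at ha
    obtain ⟨C, hC, ha⟩ := ha
    rw [Finset.mem_image] at ha
    obtain ⟨l, hl, rfl⟩ := ha
    exact ⟨C, hC, l.1, by simpa using hl⟩
  have occB : ∀ a ∈ atomsB, AtomOccurs a B := by
    intro a ha
    rw [hatB, Finset.mem_biUnion] at ha
    obtain ⟨C, hC, ha⟩ := ha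
    rw [Finset.mem_image] at ha
    obtain ⟨l, hl, rfl⟩ := ha
    exact ⟨C, hC, l.1, by simpa using hl⟩
  refine ⟨I, ?_, ?_, ?_⟩
  · intro C hC
    exact (Finset.mem_filter.mp hC).2
  · rintro ⟨M, hM⟩
    have hMB : ∀ C ∈ B, SatClause M C := fun C hC => hM C (Finset.mem_union_right _ hC)
    set C0 : GClause α := T.image (fun a => (!(M a), a)) with hC0
    have hC0sub : C0 ∈ (Finset.univ ×ˢ T).powerset := by
      rw [Finset.mem_powerset]
      intro l hl
      rw [hC0, Finset.mem_image] at hl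
      obtain ⟨a, ha, rfl⟩ := hl
      simp [Finset.mem_product, ha]
    have hnotM : ¬ SatClause M C0 := by
      rintro ⟨l, hl, hsat⟩
      rw [hC0, Finset.mem_image] at hl
      obtain ⟨a, ha, rfl⟩ := hl
      simp at hsat
    have hnotcons : ¬ (∀ N : α → Bool, (∀ D ∈ A, SatClause N D) → SatClause N C0) := by
      intro h
      exact hnotM (hM C0 (Finset.mem_union_left _ (Finset.mem_filter.mpr ⟨hC0sub, h⟩)))
    push_neg at hnotcons
    obtain ⟨N, hNA, hNC⟩ := hnotcons
    have hagree : ∀ a ∈ T, N a = M a := by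
      intro a ha
      by_contra hne
      refine hNC ⟨(!(M a), a), Finset.mem_image_of_mem _ ha, ?_⟩
      show N a = !(M a)
      rwa [Bool.eq_not_iff]
    set K : α → Bool := fun a => if a ∈ atomsB then M a else N a with hK
    apply hAB
    refine ⟨K, fun D hD => ?_⟩
    rcases Finset.mem_union.mp hD with h | h
    · obtain ⟨l, hl, hsat⟩ := hNA D h
      refine ⟨l, hl, ?_⟩
      have hlA : l.2 ∈ atomsA := by
        rw [hatA, Finset.mem_biUnion]
        exact ⟨D, h, Finset.mem_image_of_mem _ hl⟩
      by_cases hb : l.2 ∈ atomsB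
      · have hTl : l.2 ∈ T := Finset.mem_inter.mpr ⟨hlA, hb⟩
        simp only [hK, if_pos hb]
        rw [← hagree _ hTl]; exact hsat
      · simp only [hK, if_neg hb]; exact hsat
    · obtain ⟨l, hl, hsat⟩ := hMB D h
      refine ⟨l, hl, ?_⟩
      have hb : l.2 ∈ atomsB := by
        rw [hatB, Finset.mem_biUnion]
        exact ⟨D, h, Finset.mem_image_of_mem _ hl⟩
      simp only [hK, if_pos hb]; exact hsat
  · intro C hC l hl
    have := Finset.mem_powerset.mp (Finset.mem_filter.mp hC).1 hl
    rw [Finset.mem_product] at this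
    have hTl : l.2 ∈ T := this.2
    rw [hT, Finset.mem_inter] at hTl
    exact ⟨occA _ hTl.1, occB _ hTl.2⟩
end

section
/- Chain completeness of message passing (propositional abstraction of Theorem 5): let K₁,…,Kₙ be finite sets of propositional clauses arranged along a path agent 1 → 2 → ⋯ → n, with the 'peak property': for each i, the atoms shared between Kᵢ and ⋃_{j>i} Kⱼ are contained in the atoms of K_{i+1} (after K_{i+1} is augmented with the message from i). If ⋃ᵢ Kᵢ is unsatisfiable, then iteratively replacing Kᵢ's contribution by a set of consequences of Kᵢ over the shared vocabulary with K_{i+1}, the final agent n obtains an unsatisfiable set. -/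
/-- The finite set of atoms occurring in a finite set of clauses. -/
def atomsOf {α : Type} [DecidableEq α] (Γ : Finset (GClause α)) : Finset α :=
  Γ.biUnion (fun C => C.image Prod.snd)

lemma mem_atomsOf {α : Type} [DecidableEq α] {a : α} {Γ : Finset (GClause α)} :
    a ∈ atomsOf Γ ↔ AtomOccurs a Γ := by
  constructor
  · intro h
    rcases Finset.mem_biUnion.1 h with ⟨C, hC, hma⟩
    rcases Finset.mem_image.1 hma with ⟨l, hl, hl2⟩
    exact ⟨C, hC, l.1, by rw [← hl2]; exact hl⟩
  · rintro ⟨C, hC, b, hb⟩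
    exact Finset.mem_biUnion.2 ⟨C, hC, Finset.mem_image.2 ⟨(b, a), hb, rfl⟩⟩

open Classical in
/-- All clauses over the atoms shared between `Γ` and `Δ` that are entailed by `Γ`. -/
noncomputable def msg {α : Type} [DecidableEq α] (Γ Δ : Finset (GClause α)) :
    Finset (GClause α) :=
  ((Finset.univ ×ˢ (atomsOf Γ ∩ atomsOf Δ)).powerset).filter
    (fun C => ∀ M : α → Bool, (∀ D ∈ Γ, SatClause M D) → SatClause M C)

lemma mem_msg {α : Type} [DecidableEq α] {Γ Δ : Finset (GClause α)} {C : GClause α}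
    (h : C ∈ msg Γ Δ) :
    C ⊆ Finset.univ ×ˢ (atomsOf Γ ∩ atomsOf Δ) ∧
      (∀ M : α → Bool, (∀ D ∈ Γ, SatClause M D) → SatClause M C) := by
  classical
  rcases Finset.mem_filter.1 h with ⟨h1, h2⟩
  exact ⟨Finset.mem_powerset.1 h1, h2⟩

lemma msg_unsat {α : Type} [DecidableEq α] (Γ Δ : Finset (GClause α))
    (h : ¬ ∃ I : α → Bool, ∀ C ∈ Γ ∪ Δ, SatClause I C) :
    ¬ ∃ M : α → Bool, ∀ C ∈ msg Γ Δ ∪ Δ, SatClause M C := by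
  classical
  rintro ⟨M, hM⟩
  set S : Finset α := atomsOf Γ ∩ atomsOf Δ with hS
  by_cases hcase : ∃ I : α → Bool, (∀ C ∈ Γ, SatClause I C) ∧ ∀ a ∈ S, I a = M a
  · rcases hcase with ⟨I, hIΓ, hIS⟩
    apply h
    refine ⟨fun a => if a ∈ atomsOf Γ then I a else M a, ?_⟩
    intro C hC
    rcases Finset.mem_union.1 hC with hCΓ | hCΔ
    · rcases hIΓ C hCΓ with ⟨l, hl, hIl⟩
      refine ⟨l, hl, ?_⟩
      have : l.2 ∈ atomsOf Γ := mem_atomsOf.2 ⟨C, hCΓ, l.1, by simpa using hl⟩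
      simp [this, hIl]
    · rcases hM C (Finset.mem_union_right _ hCΔ) with ⟨l, hl, hMl⟩
      refine ⟨l, hl, ?_⟩
      by_cases hg : l.2 ∈ atomsOf Γ
      · have hd : l.2 ∈ atomsOf Δ := mem_atomsOf.2 ⟨C, hCΔ, l.1, by simpa using hl⟩
        have : l.2 ∈ S := Finset.mem_inter.2 ⟨hg, hd⟩
        simp [hg, hIS _ this, hMl]
      · simp [hg, hMl]
  · -- the "blocking clause" D is entailed by Γ, lies over S, yet M falsifies it
    set D : GClause α := S.image (fun a => (!(M a), a)) with hD
    have hDmem : D ∈ msg Γ Δ := by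
      refine Finset.mem_filter.2 ⟨Finset.mem_powerset.2 ?_, ?_⟩
      · intro l hl
        rcases Finset.mem_image.1 hl with ⟨a, ha, rfl⟩
        exact Finset.mem_product.2 ⟨Finset.mem_univ _, ha⟩
      · intro M' hM'
        by_contra hnot
        apply hcase
        refine ⟨M', hM', ?_⟩
        intro a ha
        by_contra hne
        apply hnot
        refine ⟨(!(M a), a), Finset.mem_image.2 ⟨a, ha, rfl⟩, ?_⟩
        simp only
        cases hMa : M a <;> cases hM'a : M' a <;> simp_all
    rcases hM D (Finset.mem_union_left _ hDmem) with ⟨l, hl, hMl⟩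
    rcases Finset.mem_image.1 hl with ⟨a, _, rfl⟩
    simp at hMl

/-- The iterated messages. -/
noncomputable def Umk {α : Type} [DecidableEq α] (K : ℕ → Finset (GClause α)) (n : ℕ) :
    ℕ → Finset (GClause α)
  | 0 => ∅
  | (i + 1) => msg (K i ∪ Umk K n i) ((Finset.Ioc i n).biUnion K)

/-- Chain completeness of message passing along a path of agents `0 → 1 → ⋯ → n`:
if the union of the knowledge bases `K 0, …, K n` is unsatisfiable, then there
are message sets `U 1, …, U n` — `U (i+1)` consisting of clauses entailed by
`K i ∪ U i` whose atoms occur both in `K i ∪ U i` and in some later knowledge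
base — such that the final agent's set `U n ∪ K n` is unsatisfiable. -/
theorem chain_report_complete {α : Type} [DecidableEq α]
    (n : ℕ) (K : ℕ → Finset (GClause α))
    (hunsat : ¬ ∃ I : α → Bool, ∀ i ≤ n, ∀ C ∈ K i, SatClause I C) :
    ∃ U : ℕ → Finset (GClause α),
      U 0 = ∅ ∧
      (∀ i < n,
        (∀ C ∈ U (i + 1), ∀ M : α → Bool,
            (∀ D ∈ K i ∪ U i, SatClause M D) → SatClause M C) ∧
        (∀ C ∈ U (i + 1), ∀ l ∈ C,
            AtomOccurs (Prod.snd l) (K i ∪ U i) ∧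
            ∃ j, i < j ∧ j ≤ n ∧ AtomOccurs (Prod.snd l) (K j))) ∧
      (¬ ∃ M : α → Bool, ∀ C ∈ U n ∪ K n, SatClause M C) := by
  classical
  set U := Umk K n with hU
  refine ⟨U, rfl, ?_, ?_⟩
  · intro i _
    constructor
    · intro C hC M hMem
      exact (mem_msg hC).2 M hMem
    · intro C hC l hl
      have hsub := (mem_msg hC).1
      have := Finset.mem_product.1 (hsub hl)
      have hS := Finset.mem_inter.1 this.2
      refine ⟨mem_atomsOf.1 hS.1, ?_⟩
      rcases mem_atomsOf.1 hS.2 with ⟨C', hC', b, hb⟩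
      rcases Finset.mem_biUnion.1 hC' with ⟨j, hj, hCj⟩
      rcases Finset.mem_Ioc.1 hj with ⟨hij, hjn⟩
      exact ⟨j, hij, hjn, C', hCj, b, hb⟩
  · -- main induction: Q i : (K i ∪ U i) ∪ ⋃_{i<j≤n} K j is unsatisfiable
    have key : ∀ i ≤ n,
        ¬ ∃ I : α → Bool, ∀ C ∈ (K i ∪ U i) ∪ (Finset.Ioc i n).biUnion K, SatClause I C := by
      intro i
      induction i with
      | zero =>
        intro _
        rintro ⟨I, hI⟩
        apply hunsat
        refine ⟨I, fun j hj C hC => ?_⟩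
        rcases Nat.eq_zero_or_pos j with rfl | hjpos
        · exact hI C (Finset.mem_union_left _ (Finset.mem_union_left _ (by simpa [hU, Umk] using hC)))
        · exact hI C (Finset.mem_union_right _
            (Finset.mem_biUnion.2 ⟨j, Finset.mem_Ioc.2 ⟨hjpos, hj⟩, hC⟩))
      | succ i ih =>
        intro hin
        have hi : i ≤ n := Nat.le_of_succ_le hin
        have hprev := ih hi
        have hstep := msg_unsat (K i ∪ U i) ((Finset.Ioc i n).biUnion K) hprev
        rintro ⟨I, hI⟩
        apply hstep
        refine ⟨I, ?_⟩
        intro C hC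
        have hIoc : Finset.Ioc i n = insert (i + 1) (Finset.Ioc (i + 1) n) := by
          ext j
          simp only [Finset.mem_Ioc, Finset.mem_insert]
          omega
        rcases Finset.mem_union.1 hC with hCm | hCΔ
        · exact hI C (Finset.mem_union_left _ (Finset.mem_union_right _ (by
            simpa [hU, Umk] using hCm)))
        · rcases Finset.mem_biUnion.1 hCΔ with ⟨j, hj, hCj⟩
          rw [hIoc] at hj
          rcases Finset.mem_insert.1 hj with rfl | hj'
          · exact hI C (Finset.mem_union_left _ (Finset.mem_union_left _ hCj))
          · exact hI C (Finset.mem_union_right _ (Finset.mem_biUnion.2 ⟨j, hj', hCj⟩))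
    have := key n le_rfl
    rintro ⟨M, hM⟩
    apply this
    refine ⟨M, ?_⟩
    intro C hC
    simp only [Finset.Ioc_self, Finset.biUnion_empty, Finset.union_empty] at hC
    rcases Finset.mem_union.1 hC with h1 | h2
    · exact hM C (Finset.mem_union_right _ h1)
    · exact hM C (Finset.mem_union_left _ h2)
end
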